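/- arXiv:2202.01860 — 4 statements merged into one kernel-verified Lean document; each statement's English description precedes it below -/
import Mathlib

section
/- For φ₁, φ₂, φ₃ ∈ ℂ² with images x₁, x₂, x₃ ∈ ℝ³ under the Hopf-type map, the real part of the triple product satisfies Re((φ₁*φ₂)(φ₃*φ₁)(φ₂*φ₃)) = (1/4)(|x₁||x₂||x₃| + |x₁|(x₂·x₃) + |x₂|(x₃·x₁) + |x₃|(x₁·x₂)). -/
open Matrix

/-- The Hopf-type map `(z,u) ↦ (2Re(z̄u), 2Im(z̄u), |z|² − |u|²)` from `ℂ²` to `ℝ³`. -/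
noncomputable def hopf (φ : ℂ × ℂ) : Fin 3 → ℝ :=
  ![2 * ((starRingEnd ℂ) φ.1 * φ.2).re, 2 * ((starRingEnd ℂ) φ.1 * φ.2).im,
    ‖φ.1‖ ^ 2 - ‖φ.2‖ ^ 2]

/-- The Hermitian inner product `φ*ψ = z̄₁z₂ + ū₁u₂` on `ℂ²`. -/
noncomputable def herm (φ ψ : ℂ × ℂ) : ℂ :=
  (starRingEnd ℂ) φ.1 * ψ.1 + (starRingEnd ℂ) φ.2 * ψ.2

/-- The squared Hermitian norm `‖φ‖² = |z|² + |u|²`. -/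
noncomputable def nsq (φ : ℂ × ℂ) : ℝ :=
  ‖φ.1‖ ^ 2 + ‖φ.2‖ ^ 2

/-!
Three vectors of `ℂ²` have a singular Hermitian Gram matrix; expanding its `3 × 3` determinant gives
`2 Re((φ₁*φ₂)(φ₃*φ₁)(φ₂*φ₃)) = Σ ‖φᵢ‖² |φⱼ*φₖ|² - ‖φ₁‖² ‖φ₂‖² ‖φ₃‖²`.
The Fierz identity `xᵢ · xⱼ = 2 |φᵢ*φⱼ|² - ‖φᵢ‖² ‖φⱼ‖²`, in particular `|xᵢ| = ‖φᵢ‖²`, turns this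
into the claimed formula.
-/

open RCLike Module
open scoped InnerProductSpace ComplexConjugate

section Gram

variable {𝕜 E : Type*} [RCLike 𝕜] [SeminormedAddCommGroup E] [InnerProductSpace 𝕜 E]

theorem Matrix.det_gram_eq_zero_of_finrank_lt [FiniteDimensional 𝕜 E] {ι : Type*} [Fintype ι]
    [DecidableEq ι] (h : finrank 𝕜 E < Fintype.card ι) (v : ι → E) : (gram 𝕜 v).det = 0 := by
  by_contra hdet
  exact h.not_ge (linearIndependent_of_det_gram_ne_zero hdet).fintype_card_le_finrank

theorem Matrix.det_gram_fin_three (v : Fin 3 → E) :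
    (gram 𝕜 v).det = ((‖v 0‖ ^ 2 * ‖v 1‖ ^ 2 * ‖v 2‖ ^ 2
      + 2 * re (⟪v 0, v 1⟫_𝕜 * ⟪v 2, v 0⟫_𝕜 * ⟪v 1, v 2⟫_𝕜)
      - ‖v 0‖ ^ 2 * ‖⟪v 1, v 2⟫_𝕜‖ ^ 2 - ‖v 1‖ ^ 2 * ‖⟪v 2, v 0⟫_𝕜‖ ^ 2
      - ‖v 2‖ ^ 2 * ‖⟪v 0, v 1⟫_𝕜‖ ^ 2 : ℝ) : 𝕜) := by
  rw [det_fin_three]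
  simp only [gram_apply, inner_self_eq_norm_sq_to_K]
  push_cast
  rw [← mul_conj, ← mul_conj, ← mul_conj, ← add_conj]
  simp only [map_mul, inner_conj_symm]
  ring

theorem re_inner_mul_inner_mul_inner_of_finrank_le_two [FiniteDimensional 𝕜 E]
    (hE : finrank 𝕜 E ≤ 2) (x y z : E) :
    2 * re (⟪x, y⟫_𝕜 * ⟪z, x⟫_𝕜 * ⟪y, z⟫_𝕜) = ‖x‖ ^ 2 * ‖⟪y, z⟫_𝕜‖ ^ 2
      + ‖y‖ ^ 2 * ‖⟪z, x⟫_𝕜‖ ^ 2 + ‖z‖ ^ 2 * ‖⟪x, y⟫_𝕜‖ ^ 2 - ‖x‖ ^ 2 * ‖y‖ ^ 2 * ‖z‖ ^ 2 := by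
  have h := det_gram_eq_zero_of_finrank_lt (𝕜 := 𝕜)
    (by simpa using hE.trans_lt (by norm_num)) ![x, y, z]
  rw [det_gram_fin_three, ofReal_eq_zero] at h
  simp only [cons_val_zero, cons_val_one, cons_val_two, head_cons, tail_cons] at h
  linarith

end Gram

theorem herm_eq_inner (φ ψ : ℂ × ℂ) :
    herm φ ψ = ⟪WithLp.toLp 2 φ, WithLp.toLp 2 ψ⟫_ℂ := by
  simp [herm, WithLp.prod_inner_apply, mul_comm]

theorem nsq_eq_norm_sq (φ : ℂ × ℂ) : nsq φ = ‖WithLp.toLp 2 φ‖ ^ 2 := by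
  simp [nsq, WithLp.prod_norm_sq_eq_of_L2]

theorem finrank_withLp_prod : finrank ℂ (WithLp 2 (ℂ × ℂ)) = 2 := by
  rw [(WithLp.linearEquiv 2 ℂ (ℂ × ℂ)).finrank_eq]
  simp

theorem hopf_dotProduct_hopf (φ ψ : ℂ × ℂ) :
    hopf φ ⬝ᵥ hopf ψ = 2 * ‖herm φ ψ‖ ^ 2 - nsq φ * nsq ψ := by
  simp only [herm, hopf, nsq, dotProduct, Fin.sum_univ_three, cons_val_zero, cons_val_one,
    cons_val_two, head_cons, tail_cons, Complex.sq_norm, Complex.normSq_apply, Complex.mul_re,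
    Complex.mul_im, Complex.add_re, Complex.add_im, Complex.conj_re, Complex.conj_im]
  ring

theorem sqrt_hopf_dotProduct_self (φ : ℂ × ℂ) : √(hopf φ ⬝ᵥ hopf φ) = nsq φ := by
  have hself : ‖herm φ φ‖ = nsq φ := by
    rw [herm_eq_inner, nsq_eq_norm_sq, inner_self_eq_norm_sq_to_K]
    norm_cast
    exact abs_of_nonneg (by positivity)
  rw [hopf_dotProduct_hopf, hself, show 2 * nsq φ ^ 2 - nsq φ * nsq φ = nsq φ ^ 2 by ring,
    Real.sqrt_sq (by rw [nsq_eq_norm_sq]; positivity)]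

theorem two_mul_re_herm_mul_herm_mul_herm (φ₁ φ₂ φ₃ : ℂ × ℂ) :
    2 * (herm φ₁ φ₂ * herm φ₃ φ₁ * herm φ₂ φ₃).re = nsq φ₁ * ‖herm φ₂ φ₃‖ ^ 2
      + nsq φ₂ * ‖herm φ₃ φ₁‖ ^ 2 + nsq φ₃ * ‖herm φ₁ φ₂‖ ^ 2 - nsq φ₁ * nsq φ₂ * nsq φ₃ := by
  simp only [herm_eq_inner, nsq_eq_norm_sq]
  exact re_inner_mul_inner_mul_inner_of_finrank_le_two finrank_withLp_prod.le _ _ _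

theorem re_triple_product (φ₁ φ₂ φ₃ : ℂ × ℂ) :
    (herm φ₁ φ₂ * herm φ₃ φ₁ * herm φ₂ φ₃).re
      = (1 / 4) *
        (Real.sqrt (hopf φ₁ ⬝ᵥ hopf φ₁) * Real.sqrt (hopf φ₂ ⬝ᵥ hopf φ₂) *
            Real.sqrt (hopf φ₃ ⬝ᵥ hopf φ₃)
          + Real.sqrt (hopf φ₁ ⬝ᵥ hopf φ₁) * (hopf φ₂ ⬝ᵥ hopf φ₃)
          + Real.sqrt (hopf φ₂ ⬝ᵥ hopf φ₂) * (hopf φ₃ ⬝ᵥ hopf φ₁)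
          + Real.sqrt (hopf φ₃ ⬝ᵥ hopf φ₃) * (hopf φ₁ ⬝ᵥ hopf φ₂)) := by
  simp only [sqrt_hopf_dotProduct_self]
  simp only [hopf_dotProduct_hopf]
  linear_combination (1 / 2 : ℝ) * two_mul_re_herm_mul_herm_mul_herm φ₁ φ₂ φ₃
end

section
/- Let Γ₁,…,Γ_N be nonzero real numbers and D_Γ = diag(Γ₁,…,Γ_N). Define 𝔲(D_Γ) = { ζ̃ ∈ ℂ^{N×N} : ζ̃ D_Γ + D_Γ ζ̃* = 0 } and on the space 𝔲(N) of skew-Hermitian N×N matrices define the bracket [ξ,η]_Γ := ξ D_Γ⁻¹ η − η D_Γ⁻¹ ξ. Then the linear map ζ̃ ↦ ζ̃ D_Γ is a bijection from 𝔲(D_Γ) onto 𝔲(N), and it intertwines the matrix commutator on 𝔲(D_Γ) with the bracket [·,·]_Γ, i.e., [ζ̃₁, ζ̃₂] D_Γ = [ζ̃₁ D_Γ, ζ̃₂ D_Γ]_Γ for all ζ̃₁, ζ̃₂ ∈ 𝔲(D_Γ). -/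
/-!
Because `D` is Hermitian, `ζ D + D ζᴴ = ζ D + (ζ D)ᴴ`, so `𝔲(D_Γ)` is exactly the preimage of
`𝔲(N)` under right multiplication by the invertible matrix `D`, which is a bijection of the
whole matrix ring.
-/

open Matrix

theorem commutator_mul_eq_of_mul_eq_one {R : Type*} [Ring R] {d e : R} (h : d * e = 1)
    (a b : R) : (a * b - b * a) * d = a * d * e * (b * d) - b * d * e * (a * d) := by
  rw [mul_assoc a d e, mul_assoc b d e, h, mul_one, mul_one]
  noncomm_ring

namespace Matrix

variable {n α : Type*} [Fintype n] [Ring α] [StarRing α] {D : Matrix n n α}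

theorem IsHermitian.mul_add_mul_conjTranspose_eq_zero_iff (hD : D.IsHermitian)
    (ζ : Matrix n n α) : ζ * D + D * ζᴴ = 0 ↔ (ζ * D)ᴴ = -(ζ * D) := by
  rw [conjTranspose_mul, hD.eq, eq_neg_iff_add_eq_zero, add_comm]

theorem IsHermitian.bijOn_mul_right [DecidableEq n] (hD : D.IsHermitian) (hu : IsUnit D) :
    Set.BijOn (· * D) {ζ | ζ * D + D * ζᴴ = 0} {ξ | ξᴴ = -ξ} := by
  convert (IsUnit.isUnit_iff_mulRight_bijective.mp hu).bijOn_preimage using 1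
  ext ζ
  exact hD.mul_add_mul_conjTranspose_eq_zero_iff ζ

end Matrix

/-- The map `ζ̃ ↦ ζ̃ D_Γ` is a bijection from `𝔲(D_Γ)` onto the skew-Hermitian
matrices `𝔲(N)`, intertwining the commutator with the modified bracket
`[ξ,η]_Γ = ξ D_Γ⁻¹ η − η D_Γ⁻¹ ξ`. -/
theorem uDGamma_iso (N : ℕ) (Γ : Fin N → ℝ) (hΓ : ∀ i, Γ i ≠ 0)
    (D : Matrix (Fin N) (Fin N) ℂ) (hD : D = Matrix.diagonal fun i => (Γ i : ℂ)) :
    Set.BijOn (fun ζ : Matrix (Fin N) (Fin N) ℂ => ζ * D)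
      {ζ | ζ * D + D * ζᴴ = 0} {ξ | ξᴴ = -ξ} ∧
    ∀ ζ₁ ζ₂ : Matrix (Fin N) (Fin N) ℂ,
      ζ₁ * D + D * ζ₁ᴴ = 0 → ζ₂ * D + D * ζ₂ᴴ = 0 →
      (ζ₁ * ζ₂ - ζ₂ * ζ₁) * D
        = (ζ₁ * D) * D⁻¹ * (ζ₂ * D) - (ζ₂ * D) * D⁻¹ * (ζ₁ * D) := by
  have hHerm : D.IsHermitian :=
    hD ▸ isHermitian_diagonal_of_self_adjoint _ (funext fun i => Complex.conj_ofReal (Γ i))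
  have hUnit : IsUnit D :=
    hD ▸ isUnit_diagonal.mpr
      (Pi.isUnit_iff.mpr fun i => (Complex.ofReal_ne_zero.mpr (hΓ i)).isUnit)
  have hInv : D * D⁻¹ = 1 := mul_nonsing_inv D ((isUnit_iff_isUnit_det D).mp hUnit)
  exact ⟨hHerm.bijOn_mul_right hUnit,
    fun ζ₁ ζ₂ _ _ => commutator_mul_eq_of_mul_eq_one hInv ζ₁ ζ₂⟩
end

section
/- Let D_Γ = diag(Γ₁,…,Γ_N) with all Γᵢ nonzero. For every positive integer j, the function C_j(λ) = tr((i D_Γ λ)^j) is infinitesimally invariant: for all skew-Hermitian ξ and λ, the derivative of C_j along the coadjoint direction ad*_ξ λ = λ ξ D_Γ⁻¹ − D_Γ⁻¹ ξ λ vanishes, i.e., tr((i D_Γ λ)^{j−1} · i D_Γ (λ ξ D_Γ⁻¹ − D_Γ⁻¹ ξ λ)) = 0. -/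
/-!
Write `M = D λ`. Since `D D⁻¹ = 1`, the direction `D (λ ξ D⁻¹ - D⁻¹ ξ λ)` equals `M ξ D⁻¹ - ξ λ`,
and since `D⁻¹ D = 1`, `D⁻¹ M^(k+1) = λ M^k`. Cyclicity of the trace then turns both
`tr (M^k M ξ D⁻¹)` and `tr (M^k ξ λ)` into `tr (λ M^k ξ)`. The factor `i` is absorbed into `λ`.
-/

open Matrix

theorem Matrix.trace_pow_mul_coadjoint_eq_zero {n R : Type*} [Fintype n] [DecidableEq n]
    [CommRing R] {D : Matrix n n R} (hD : IsUnit D.det) (μ ξ : Matrix n n R) (k : ℕ) :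
    trace ((D * μ) ^ k * (D * (μ * ξ * D⁻¹ - D⁻¹ * ξ * μ))) = 0 := by
  have hsplit : D * (μ * ξ * D⁻¹ - D⁻¹ * ξ * μ) = D * μ * (ξ * D⁻¹) - ξ * μ := by
    rw [mul_sub, Matrix.mul_assoc D⁻¹, mul_nonsing_inv_cancel_left _ _ hD, Matrix.mul_assoc,
      Matrix.mul_assoc]
  rw [hsplit, mul_sub, trace_sub, sub_eq_zero]
  calc trace ((D * μ) ^ k * (D * μ * (ξ * D⁻¹)))
      = trace (D⁻¹ * (D * μ) ^ (k + 1) * ξ) := by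
        rw [← Matrix.mul_assoc, ← pow_succ, ← trace_mul_cycle, Matrix.mul_assoc]
    _ = trace (μ * ((D * μ) ^ k * ξ)) := by
        rw [pow_succ', Matrix.mul_assoc D, ← Matrix.mul_assoc, nonsing_inv_mul _ hD,
          Matrix.one_mul, Matrix.mul_assoc]
    _ = trace ((D * μ) ^ k * (ξ * μ)) := by
        rw [trace_mul_comm, Matrix.mul_assoc]

theorem Casimir_infinitesimal_general (N : ℕ) (Γ : Fin N → ℝ) (hΓ : ∀ i, Γ i ≠ 0)
    (D : Matrix (Fin N) (Fin N) ℂ) (hD : D = Matrix.diagonal fun i => (Γ i : ℂ))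
    (j : ℕ)
    (ξ lam : Matrix (Fin N) (Fin N) ℂ) :
    Matrix.trace ((Complex.I • (D * lam)) ^ (j - 1) *
        (Complex.I • (D * (lam * ξ * D⁻¹ - D⁻¹ * ξ * lam)))) = 0 := by
  have hdet : IsUnit D.det := by
    rw [← isUnit_iff_isUnit_det, hD, isUnit_diagonal, Pi.isUnit_iff]
    exact fun i => isUnit_iff_ne_zero.mpr (Complex.ofReal_ne_zero.mpr (hΓ i))
  have hcoadj : Complex.I • (D * (lam * ξ * D⁻¹ - D⁻¹ * ξ * lam))
      = D * ((Complex.I • lam) * ξ * D⁻¹ - D⁻¹ * ξ * (Complex.I • lam)) := by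
    simp only [mul_smul_comm, smul_mul_assoc, ← smul_sub]
  rw [← mul_smul_comm, hcoadj]
  exact trace_pow_mul_coadjoint_eq_zero hdet (Complex.I • lam) ξ (j - 1)

/-- Infinitesimal invariance of `C_j(λ) = tr((i D_Γ λ)^j)`: the derivative of `C_j`
along the coadjoint direction `ad*_ξ λ = λ ξ D_Γ⁻¹ − D_Γ⁻¹ ξ λ` vanishes. -/
theorem Casimir_infinitesimal (N : ℕ) (Γ : Fin N → ℝ) (hΓ : ∀ i, Γ i ≠ 0)
    (D : Matrix (Fin N) (Fin N) ℂ) (hD : D = Matrix.diagonal fun i => (Γ i : ℂ))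
    (j : ℕ) (hj : 1 ≤ j)
    (ξ lam : Matrix (Fin N) (Fin N) ℂ) (hξ : ξᴴ = -ξ) (hlam : lamᴴ = -lam) :
    Matrix.trace ((Complex.I • (D * lam)) ^ (j - 1) *
        (Complex.I • (D * (lam * ξ * D⁻¹ - D⁻¹ * ξ * lam)))) = 0 :=
  Casimir_infinitesimal_general N Γ hΓ D hD j ξ lam
end

section
/- Let φ₁,…,φ_N ∈ ℂ² each satisfy ‖φᵢ‖² = R, and set λ_{ij} = (2/R) φᵢ*φⱼ and μ_{ijk} = λ_{ij} λ_{ki} λ_{jk} for distinct i, j, k. Then Re μ_{ijk} = |λ_{ij}|² + |λ_{ki}|² + |λ_{jk}|² − 4. -/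
open Matrix

/-! Three vectors in `ℂ²` are linearly dependent, so their `3 × 3` Gram matrix
`(herm a b)` is singular. Expanding its determinant gives
`‖x‖²‖y‖²‖z‖² + 2 Re(⟨x,y⟩⟨z,x⟩⟨y,z⟩) = ‖x‖²|⟨y,z⟩|² + ‖y‖²|⟨z,x⟩|² + ‖z‖²|⟨x,y⟩|²`,
which on the sphere `‖·‖² = R` is the stated identity after scaling by `2 / R`. -/

lemma herm_self (φ : ℂ × ℂ) : herm φ φ = nsq φ := by
  simp only [herm, nsq, Complex.ofReal_add, Complex.ofReal_pow, Complex.conj_mul']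

lemma two_mul_re_herm_cycle_add_nsq_mul (x y z : ℂ × ℂ) :
    2 * (herm x y * herm z x * herm y z).re + nsq x * nsq y * nsq z
      = nsq x * ‖herm y z‖ ^ 2 + nsq y * ‖herm z x‖ ^ 2 + nsq z * ‖herm x y‖ ^ 2 := by
  apply Complex.ofReal_injective
  push_cast
  simp only [Complex.re_eq_add_conj, ← Complex.conj_mul', ← herm_self, herm, map_add, map_mul,
    Complex.conj_conj]
  ring

lemma re_herm_cycle_of_nsq_eq {R : ℝ} {x y z : ℂ × ℂ} (hx : nsq x = R) (hy : nsq y = R)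
    (hz : nsq z = R) :
    (herm x y * herm z x * herm y z).re
      = R / 2 * (‖herm x y‖ ^ 2 + ‖herm z x‖ ^ 2 + ‖herm y z‖ ^ 2 - R ^ 2) := by
  have h := two_mul_re_herm_cycle_add_nsq_mul x y z
  rw [hx, hy, hz] at h
  linear_combination h / 2

theorem re_mu_ijk_general (N : ℕ) (R : ℝ) (hR : 0 < R) (φ : Fin N → ℂ × ℂ)
    (hsphere : ∀ i, nsq (φ i) = R) (i j k : Fin N) :
    ((2 / R : ℂ) * herm (φ i) (φ j) * ((2 / R : ℂ) * herm (φ k) (φ i)) *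
        ((2 / R : ℂ) * herm (φ j) (φ k))).re
      = ‖(2 / R : ℂ) * herm (φ i) (φ j)‖ ^ 2
        + ‖(2 / R : ℂ) * herm (φ k) (φ i)‖ ^ 2
        + ‖(2 / R : ℂ) * herm (φ j) (φ k)‖ ^ 2 - 4 := by
  have hre := re_herm_cycle_of_nsq_eq (hsphere i) (hsphere j) (hsphere k)
  have hc : (2 / R : ℂ) = ((2 / R : ℝ) : ℂ) := by push_cast; rfl
  have hscale : ∀ p q r : ℂ, ((2 / R : ℝ) : ℂ) * p * (((2 / R : ℝ) : ℂ) * q) *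
      (((2 / R : ℝ) : ℂ) * r) = (((2 / R) ^ 3 : ℝ) : ℂ) * (p * q * r) := by
    intro p q r; push_cast; ring
  rw [hc, hscale, Complex.re_ofReal_mul, hre]
  simp only [norm_mul, Complex.norm_real, Real.norm_of_nonneg (by positivity : (0 : ℝ) ≤ 2 / R)]
  field_simp
  ring

theorem re_mu_ijk (N : ℕ) (R : ℝ) (hR : 0 < R) (φ : Fin N → ℂ × ℂ)
    (hsphere : ∀ i, nsq (φ i) = R) (i j k : Fin N)
    (hij : i ≠ j) (hjk : j ≠ k) (hik : i ≠ k) :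
    ((2 / R : ℂ) * herm (φ i) (φ j) * ((2 / R : ℂ) * herm (φ k) (φ i)) *
        ((2 / R : ℂ) * herm (φ j) (φ k))).re
      = ‖(2 / R : ℂ) * herm (φ i) (φ j)‖ ^ 2
        + ‖(2 / R : ℂ) * herm (φ k) (φ i)‖ ^ 2
        + ‖(2 / R : ℂ) * herm (φ j) (φ k)‖ ^ 2 - 4 :=
  re_mu_ijk_general N R hR φ hsphere i j k
end
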